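/- Let d ≥ 1 be an integer and let x : [n] → {−1, 0, +1} satisfy |Σ_{h=i}^{j} x_h| ≤ d + unq(i,j) − 3 for every pair 1 ≤ i ≤ j ≤ n, where unq(i,j) denotes the number of indices h with i ≤ h ≤ j and x_h = 0. Then there exists y : [n] → {−1, +1} with y_h = x_h whenever x_h ≠ 0 and |Σ_{h=i}^{j} y_h| ≤ d for every pair 1 ≤ i ≤ j ≤ n. -/

import Mathlib

/-!
The prefix sums of a completion form a walk with steps `±1`, forced where `x ≠ 0`, and every
interval has discrepancy at most `d` exactly when this walk stays in a strip `[lo, lo + d]`.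
The heights reachable inside the strip at time `k` are those of the parity of `k` between two
envelopes: the all-`-1` completion reflected upwards at `lo`, and the all-`+1` completion
reflected downwards at `lo + d`. This set can only become empty at a forced step that meets an
envelope lying against the opposite wall. The hypothesis `|disc| ≤ d + unq - 3` says that the
all-`-1` completion never rises, and the all-`+1` completion never falls, by more than `d - 3` over
an interval; with `lo` just below the minimum of the all-`+1` walk this keeps each envelope off
the opposite wall.
-/

open Finset

namespace IntervalCompletion

def fillZeros (x : ℕ → ℤ) (c : ℤ) (h : ℕ) : ℤ := if x h = 0 then c else x h

def prefixSum (f : ℕ → ℤ) (k : ℕ) : ℤ := ∑ h ∈ range k, f h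

def IsCompletion (x y : ℕ → ℤ) (n : ℕ) : Prop :=
  (∀ h < n, y h = -1 ∨ y h = 1) ∧ (∀ h < n, x h ≠ 0 → y h = x h)

def IsReachable (x : ℕ → ℤ) (lo hi : ℤ) (k : ℕ) (v : ℤ) : Prop :=
  ∃ y, IsCompletion x y k ∧ (∀ t ≤ k, lo ≤ prefixSum y t ∧ prefixSum y t ≤ hi) ∧
    prefixSum y k = v

section PrefixSum

variable (f : ℕ → ℤ)

@[simp] lemma prefixSum_zero : prefixSum f 0 = 0 := by simp [prefixSum]

lemma prefixSum_succ (k : ℕ) : prefixSum f (k + 1) = prefixSum f k + f k :=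
  sum_range_succ f k

lemma prefixSum_neg (k : ℕ) : prefixSum (-f) k = -prefixSum f k := by
  simp [prefixSum]

lemma sum_Icc_eq_prefixSum_sub {i j : ℕ} (hij : i ≤ j) :
    ∑ h ∈ Icc i j, f h = prefixSum f (j + 1) - prefixSum f i := by
  rw [← Ico_add_one_right_eq_Icc, sum_Ico_eq_sub _ (by omega)]
  rfl

end PrefixSum

lemma sum_fillZeros (x : ℕ → ℤ) (c : ℤ) (s : Finset ℕ) :
    ∑ h ∈ s, fillZeros x c h = ∑ h ∈ s, x h + c * #{h ∈ s | x h = 0} := by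
  have hsplit : ∀ h, fillZeros x c h = x h + if x h = 0 then c else 0 := by
    intro h
    by_cases hx : x h = 0 <;> simp [fillZeros, hx]
  rw [sum_congr rfl fun h _ => hsplit h, sum_add_distrib, ← sum_filter, sum_const, nsmul_eq_mul,
    mul_comm]

lemma prefixSum_fillZeros_sub (x : ℕ → ℤ) (c : ℤ) {i j : ℕ} (hij : i ≤ j) :
    prefixSum (fillZeros x c) (j + 1) - prefixSum (fillZeros x c) i =
      ∑ h ∈ Icc i j, x h + c * #{h ∈ Icc i j | x h = 0} := by
  rw [← sum_Icc_eq_prefixSum_sub _ hij, sum_fillZeros]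

lemma prefixSum_fillZeros_mono (x : ℕ → ℤ) {c c' : ℤ} (hc : c ≤ c') (k : ℕ) :
    prefixSum (fillZeros x c) k ≤ prefixSum (fillZeros x c') k :=
  sum_le_sum fun h _ => by unfold fillZeros; split_ifs <;> omega

def reflectedWalk (s : ℕ → ℤ) (lo : ℤ) : ℕ → ℤ
  | 0 => 0
  | k + 1 =>
    if lo ≤ reflectedWalk s lo k + s k then reflectedWalk s lo k + s k
    else reflectedWalk s lo k + s k + 2

lemma le_reflectedWalk {s : ℕ → ℤ} {lo : ℤ} {n : ℕ} (hlo : lo ≤ 0) (hs : ∀ k < n, -1 ≤ s k) :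
    ∀ k ≤ n, lo ≤ reflectedWalk s lo k := by
  intro k
  induction k with
  | zero => simpa [reflectedWalk] using hlo
  | succ k ih =>
    intro hk
    have := ih (by omega)
    have := hs k (by omega)
    rw [reflectedWalk]
    split_ifs <;> omega

/-- `i` is the time of the last reflection, right after which the walk is at most `lo + 1`. -/
lemma reflectedWalk_le (s : ℕ → ℤ) (lo : ℤ) (k : ℕ) :
    reflectedWalk s lo k ≤ prefixSum s k ∨
      ∃ i ≤ k, reflectedWalk s lo k ≤ prefixSum s k - prefixSum s i + lo + 1 := by
  induction k with
  | zero => simp [reflectedWalk]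
  | succ k ih =>
    rw [reflectedWalk, prefixSum_succ]
    split_ifs with h
    · rcases ih with ih | ⟨i, hik, ih⟩
      · exact Or.inl (by omega)
      · exact Or.inr ⟨i, by omega, by omega⟩
    · exact Or.inr ⟨k + 1, le_rfl, by rw [prefixSum_succ]; omega⟩

def lowerEnvelope (x : ℕ → ℤ) (lo : ℤ) : ℕ → ℤ := reflectedWalk (fillZeros x (-1)) lo

def upperEnvelope (x : ℕ → ℤ) (hi : ℤ) (k : ℕ) : ℤ := -reflectedWalk (-fillZeros x 1) (-hi) k

@[simp] lemma lowerEnvelope_zero (x : ℕ → ℤ) (lo : ℤ) : lowerEnvelope x lo 0 = 0 := rfl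

@[simp] lemma upperEnvelope_zero (x : ℕ → ℤ) (hi : ℤ) : upperEnvelope x hi 0 = 0 := by
  simp [upperEnvelope, reflectedWalk]

lemma lowerEnvelope_succ (x : ℕ → ℤ) (lo : ℤ) (k : ℕ) :
    lowerEnvelope x lo (k + 1) =
      if lo ≤ lowerEnvelope x lo k + fillZeros x (-1) k then
        lowerEnvelope x lo k + fillZeros x (-1) k
      else lowerEnvelope x lo k + fillZeros x (-1) k + 2 :=
  rfl

lemma upperEnvelope_succ (x : ℕ → ℤ) (hi : ℤ) (k : ℕ) :
    upperEnvelope x hi (k + 1) =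
      if upperEnvelope x hi k + fillZeros x 1 k ≤ hi then upperEnvelope x hi k + fillZeros x 1 k
      else upperEnvelope x hi k + fillZeros x 1 k - 2 := by
  simp only [upperEnvelope, reflectedWalk, Pi.neg_apply]
  split_ifs <;> omega

section Envelopes

variable {x : ℕ → ℤ} {lo hi : ℤ} {n : ℕ}

lemma fillZeros_mem (hx : ∀ k < n, x k = -1 ∨ x k = 0 ∨ x k = 1) {c : ℤ} (hc : c = -1 ∨ c = 1)
    {k : ℕ} (hk : k < n) : fillZeros x c k = -1 ∨ fillZeros x c k = 1 := by
  unfold fillZeros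
  split_ifs with h
  · exact hc
  · have := hx k hk
    omega

lemma le_lowerEnvelope (hx : ∀ k < n, x k = -1 ∨ x k = 0 ∨ x k = 1) (hlo : lo ≤ 0) :
    ∀ k ≤ n, lo ≤ lowerEnvelope x lo k :=
  le_reflectedWalk hlo fun k hk => by have := fillZeros_mem hx (c := -1) (by simp) hk; omega

lemma upperEnvelope_le (hx : ∀ k < n, x k = -1 ∨ x k = 0 ∨ x k = 1) (hhi : 0 ≤ hi) :
    ∀ k ≤ n, upperEnvelope x hi k ≤ hi := fun k hk => by
  have := le_reflectedWalk (s := -fillZeros x 1) (lo := -hi) (by omega)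
    (fun k hk => by
      have := fillZeros_mem hx (c := 1) (by simp) hk
      simp only [Pi.neg_apply]
      omega) k hk
  unfold upperEnvelope
  omega

lemma lowerEnvelope_lt (hD : ∀ k ≤ n, prefixSum (fillZeros x (-1)) k < hi)
    (hDD : ∀ i k, i < k → k ≤ n →
      prefixSum (fillZeros x (-1)) k - prefixSum (fillZeros x (-1)) i ≤ hi - lo - 3)
    (hlohi : lo + 2 ≤ hi) {k : ℕ} (hk : k ≤ n) : lowerEnvelope x lo k < hi := by
  rcases reflectedWalk_le (fillZeros x (-1)) lo k with h | ⟨i, hik, h⟩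
  · exact h.trans_lt (hD k hk)
  · rcases hik.lt_or_eq with hik | rfl
    · have := hDD i k hik hk
      unfold lowerEnvelope
      omega
    · unfold lowerEnvelope
      omega

lemma lt_upperEnvelope (hU : ∀ k ≤ n, lo < prefixSum (fillZeros x 1) k)
    (hUU : ∀ i k, i < k → k ≤ n →
      prefixSum (fillZeros x 1) i - prefixSum (fillZeros x 1) k ≤ hi - lo - 3)
    (hlohi : lo + 2 ≤ hi) {k : ℕ} (hk : k ≤ n) : lo < upperEnvelope x hi k := by
  rcases reflectedWalk_le (-fillZeros x 1) (-hi) k with h | ⟨i, hik, h⟩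
  · have := hU k hk
    rw [prefixSum_neg] at h
    unfold upperEnvelope
    omega
  · rw [prefixSum_neg, prefixSum_neg] at h
    rcases hik.lt_or_eq with hik | rfl
    · have := hUU i k hik hk
      unfold upperEnvelope
      omega
    · unfold upperEnvelope
      omega

lemma envelope_succ (hx : ∀ k < n, x k = -1 ∨ x k = 0 ∨ x k = 1) {k : ℕ} (hk : k < n)
    (hlo : lo ≤ lowerEnvelope x lo k) (hhi : upperEnvelope x hi k ≤ hi)
    (hp : lowerEnvelope x lo k < hi) (hq : lo < upperEnvelope x hi k)
    (hpq : lowerEnvelope x lo k ≤ upperEnvelope x hi k)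
    (hpar : 2 ∣ upperEnvelope x hi k - lowerEnvelope x lo k) :
    lowerEnvelope x lo (k + 1) ≤ upperEnvelope x hi (k + 1) ∧
      2 ∣ upperEnvelope x hi (k + 1) - lowerEnvelope x lo (k + 1) := by
  rw [lowerEnvelope_succ, upperEnvelope_succ]
  rcases hx k hk with h | h | h <;> simp only [fillZeros, h] <;> split_ifs <;> omega

lemma exists_step_between_envelopes (hx : ∀ k < n, x k = -1 ∨ x k = 0 ∨ x k = 1) {k : ℕ}
    (hk : k < n) (hpq : lowerEnvelope x lo k ≤ upperEnvelope x hi k) {v : ℤ}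
    (hv₁ : lowerEnvelope x lo (k + 1) ≤ v) (hv₂ : v ≤ upperEnvelope x hi (k + 1))
    (hv : 2 ∣ v - lowerEnvelope x lo (k + 1)) :
    ∃ b, (b = -1 ∨ b = 1) ∧ (x k ≠ 0 → b = x k) ∧ lowerEnvelope x lo k ≤ v - b ∧
      v - b ≤ upperEnvelope x hi k ∧ 2 ∣ v - b - lowerEnvelope x lo k := by
  rw [lowerEnvelope_succ, upperEnvelope_succ] at *
  rcases hx k hk with h | h | h
  · refine ⟨-1, by simp, fun _ => h.symm, ?_⟩
    simp only [fillZeros, h] at *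
    split_ifs at * <;> omega
  · refine ⟨if lowerEnvelope x lo k ≤ v - 1 then 1 else -1, by split_ifs <;> simp,
      fun h' => absurd h h', ?_⟩
    simp only [fillZeros, h] at *
    split_ifs at * <;> omega
  · refine ⟨1, by simp, fun _ => h.symm, ?_⟩
    simp only [fillZeros, h] at *
    split_ifs at * <;> omega

end Envelopes

lemma isReachable_zero (x : ℕ → ℤ) {lo hi : ℤ} (hlo : lo ≤ 0) (hhi : 0 ≤ hi) :
    IsReachable x lo hi 0 0 :=
  ⟨0, ⟨fun _ h => absurd h (Nat.not_lt_zero _), fun _ h => absurd h (Nat.not_lt_zero _)⟩,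
    fun t ht => by simp [Nat.le_zero.mp ht, hlo, hhi], by simp⟩

lemma IsReachable.succ {x : ℕ → ℤ} {lo hi : ℤ} {k : ℕ} {u b : ℤ} (hu : IsReachable x lo hi k u)
    (hb : b = -1 ∨ b = 1) (hbx : x k ≠ 0 → b = x k) (hlo : lo ≤ u + b) (hhi : u + b ≤ hi) :
    IsReachable x lo hi (k + 1) (u + b) := by
  obtain ⟨y, ⟨hy, hyx⟩, hY, rfl⟩ := hu
  set y' := Function.update y k b
  have hsum : ∀ t ≤ k, prefixSum y' t = prefixSum y t := fun t ht =>
    sum_congr rfl fun h hh => Function.update_of_ne (by simp at hh; omega) _ _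
  have hlast : prefixSum y' (k + 1) = prefixSum y k + b := by
    rw [prefixSum_succ, hsum k le_rfl]
    exact congrArg _ (Function.update_self k b y)
  refine ⟨y', ⟨fun h hh => ?_, fun h hh => ?_⟩, fun t ht => ?_, hlast⟩
  · rcases (Nat.lt_succ_iff.mp hh).lt_or_eq with hh | rfl
    · simpa [y', Function.update_of_ne hh.ne] using hy h hh
    · simpa [y'] using hb
  · rcases (Nat.lt_succ_iff.mp hh).lt_or_eq with hh | rfl
    · simpa [y', Function.update_of_ne hh.ne] using hyx h hh
    · simpa [y'] using hbx
  · rcases (Nat.le_succ_iff.mp ht) with ht | rfl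
    · rw [hsum t ht]
      exact hY t ht
    · rw [hlast]
      exact ⟨hlo, hhi⟩

section Strip

variable {x : ℕ → ℤ} {lo hi : ℤ} {n : ℕ}
  (hx : ∀ k < n, x k = -1 ∨ x k = 0 ∨ x k = 1)
  (hD : ∀ k ≤ n, prefixSum (fillZeros x (-1)) k < hi)
  (hU : ∀ k ≤ n, lo < prefixSum (fillZeros x 1) k)
  (hDD : ∀ i k, i < k → k ≤ n →
    prefixSum (fillZeros x (-1)) k - prefixSum (fillZeros x (-1)) i ≤ hi - lo - 3)
  (hUU : ∀ i k, i < k → k ≤ n →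
    prefixSum (fillZeros x 1) i - prefixSum (fillZeros x 1) k ≤ hi - lo - 3)
include hx hD hU hDD hUU

lemma isReachable_of_between_envelopes :
    ∀ k ≤ n, lowerEnvelope x lo k ≤ upperEnvelope x hi k ∧
      2 ∣ upperEnvelope x hi k - lowerEnvelope x lo k ∧
      ∀ v, lowerEnvelope x lo k ≤ v → v ≤ upperEnvelope x hi k →
        2 ∣ v - lowerEnvelope x lo k → IsReachable x lo hi k v := by
  have hlo : lo < 0 := by simpa using hU 0 (Nat.zero_le n)
  have hhi : 0 < hi := by simpa using hD 0 (Nat.zero_le n)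
  intro k
  induction k with
  | zero =>
    intro _
    refine ⟨by simp, by simp, fun v hv₁ hv₂ _ => ?_⟩
    obtain rfl : v = 0 := le_antisymm (by simpa using hv₂) (by simpa using hv₁)
    exact isReachable_zero x hlo.le hhi.le
  | succ k ih =>
    intro hk
    obtain ⟨hpq, hpar, hreach⟩ := ih (by omega)
    obtain ⟨hpq', hpar'⟩ := envelope_succ hx hk (le_lowerEnvelope hx hlo.le k (by omega))
      (upperEnvelope_le hx hhi.le k (by omega)) (lowerEnvelope_lt hD hDD (by omega) (by omega))
      (lt_upperEnvelope hU hUU (by omega) (by omega)) hpq hpar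
    refine ⟨hpq', hpar', fun v hv₁ hv₂ hv => ?_⟩
    obtain ⟨b, hb, hbx, hu₁, hu₂, hu⟩ := exists_step_between_envelopes hx hk hpq hv₁ hv₂ hv
    have hvlo := (le_lowerEnvelope hx hlo.le (k + 1) hk).trans hv₁
    have hvhi := hv₂.trans (upperEnvelope_le hx hhi.le (k + 1) hk)
    simpa using (hreach (v - b) hu₁ hu₂ hu).succ hb hbx (by omega) (by omega)

lemma exists_completion_prefixSum_mem_Icc :
    ∃ y, IsCompletion x y n ∧ ∀ t ≤ n, lo ≤ prefixSum y t ∧ prefixSum y t ≤ hi := by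
  obtain ⟨hpq, -, hreach⟩ := isReachable_of_between_envelopes hx hD hU hDD hUU n le_rfl
  obtain ⟨y, hy, hY, -⟩ := hreach _ le_rfl hpq (by simp)
  exact ⟨y, hy, hY⟩

end Strip

/-- The strip is placed just below the minimum of the all-`+1` completion. -/
lemma exists_completion_prefixSum_window {x : ℕ → ℤ} {n : ℕ} {d : ℤ}
    (hx : ∀ k < n, x k = -1 ∨ x k = 0 ∨ x k = 1) (hd : 2 ≤ d)
    (hwin : ∀ i k, i < k → k ≤ n →
      prefixSum (fillZeros x (-1)) k - prefixSum (fillZeros x (-1)) i ≤ d - 3 ∧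
        prefixSum (fillZeros x 1) i - prefixSum (fillZeros x 1) k ≤ d - 3) :
    ∃ y lo, IsCompletion x y n ∧ ∀ t ≤ n, lo ≤ prefixSum y t ∧ prefixSum y t ≤ lo + d := by
  set D := prefixSum (fillZeros x (-1))
  set U := prefixSum (fillZeros x 1)
  obtain ⟨j, hj, hmin⟩ := exists_min_image (range (n + 1)) U nonempty_range_add_one
  simp only [mem_range, Nat.lt_succ_iff] at hj hmin
  have hD : ∀ k ≤ n, D k < U j - 1 + d := by
    intro k hk
    have hDU := prefixSum_fillZeros_mono x (show (-1 : ℤ) ≤ 1 by norm_num)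
    rcases lt_trichotomy k j with hkj | rfl | hjk
    · linarith [(hwin k j hkj hj).2, hDU k]
    · linarith [hDU k]
    · linarith [(hwin j k hjk hk).1, hDU j]
  obtain ⟨y, hy, hY⟩ := exists_completion_prefixSum_mem_Icc (lo := U j - 1) hx hD
    (fun k hk => by linarith [hmin k hk]) (fun i k hik hk => by linarith [(hwin i k hik hk).1])
    (fun i k hik hk => by linarith [(hwin i k hik hk).2])
  exact ⟨y, U j - 1, hy, hY⟩

end IntervalCompletion

open IntervalCompletion

theorem stmt_13 (n : ℕ) (d : ℕ) (x : ℕ → ℤ)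
    (hx : ∀ h < n, x h = -1 ∨ x h = 0 ∨ x h = 1)
    (hdisc : ∀ i j, i ≤ j → j < n →
      |∑ h ∈ Finset.Icc i j, x h| ≤
        (d : ℤ) + ((Finset.Icc i j).filter fun h => x h = 0).card - 3) :
    ∃ y : ℕ → ℤ, (∀ h < n, y h = -1 ∨ y h = 1) ∧
      (∀ h < n, x h ≠ 0 → y h = x h) ∧
      ∀ i j, i ≤ j → j < n → |∑ h ∈ Finset.Icc i j, y h| ≤ (d : ℤ) := by
  rcases Nat.eq_zero_or_pos n with rfl | hn
  · exact ⟨0, by simp, by simp, by simp⟩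
  have hd : (2 : ℤ) ≤ d := by
    have hcard : #{h ∈ Icc 0 0 | x h = 0} ≤ 1 := (card_filter_le _ _).trans (by simp)
    have := (abs_nonneg _).trans (hdisc 0 0 le_rfl hn)
    omega
  have hwin : ∀ i k, i < k → k ≤ n →
      prefixSum (fillZeros x (-1)) k - prefixSum (fillZeros x (-1)) i ≤ d - 3 ∧
        prefixSum (fillZeros x 1) i - prefixSum (fillZeros x 1) k ≤ d - 3 := by
    intro i k hik hkn
    obtain ⟨j, rfl⟩ : ∃ j, k = j + 1 := ⟨k - 1, by omega⟩
    have hij : i ≤ j := by omega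
    have := abs_le.mp (hdisc i j hij (by omega))
    have hdown := prefixSum_fillZeros_sub x (-1) hij
    have hup := prefixSum_fillZeros_sub x 1 hij
    constructor <;> linarith
  obtain ⟨y, lo, ⟨hy, hyx⟩, hY⟩ := exists_completion_prefixSum_window hx hd hwin
  refine ⟨y, hy, hyx, fun i j hij hj => ?_⟩
  rw [sum_Icc_eq_prefixSum_sub y hij, abs_le]
  have := hY i (by omega)
  have := hY (j + 1) hj
  constructor <;> linarith
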